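/- For every path U_1 →_G U_2 →_G … →_G U_ℓ in the graph G there is a monotonically increasing path U'_1 →_G U'_2 →_G … →_G U'_ℓ with U'_1 = U_1, U'_j ⊑ U'_{j+1} for all j ∈ [1..ℓ−1], and U_i ⊑ U'_j for all i ≤ j (each edge of the original path can be simulated with empty Kill sets, so that no state is deleted). -/
import Mathlib


/-- Communication operations over a message domain `D`: send `!a` or receive `?a`. -/
inductive Op (D : Type) where
  | send : D → Op D
  | recv : D → Op D
  deriving DecidableEq

/-- One transition `c →_a c'` of the broadcast network with sender `i` and receivers `R`:
the sender takes a send transition on `a`, every receiver takes a receive transition on `a`,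
and all other clients stay idle. -/
def StepAt {D Q : Type} (δ : Set (Q × Op D × Q)) (a : D) {k : ℕ}
    (c c' : Fin k → Q) (i : Fin k) (R : Set (Fin k)) : Prop :=
  i ∉ R ∧ (c i, Op.send a, c' i) ∈ δ ∧
    (∀ j ∈ R, (c j, Op.recv a, c' j) ∈ δ) ∧
    (∀ j, j ∉ R → j ≠ i → c' j = c j)

/-- A transition `c → c'` of the broadcast network (for some message, sender and receivers). -/
def Step {D Q : Type} (δ : Set (Q × Op D × Q)) {k : ℕ} (c c' : Fin k → Q) : Prop :=
  ∃ (a : D) (i : Fin k) (R : Set (Fin k)), StepAt δ a c c' i R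

/-- `post_{?a}(S)`: successors of `S` under receive transitions on `a`. -/
def postRecv {D Q : Type} (δ : Set (Q × Op D × Q)) (a : D) (S : Set Q) : Set Q :=
  {r' | ∃ r ∈ S, (r, Op.recv a, r') ∈ δ}

/-- `enabled_{?a}(S)`: states of `S` where a receive of `a` is enabled. -/
def enabledRecv {D Q : Type} (δ : Set (Q × Op D × Q)) (a : D) (S : Set Q) : Set Q :=
  {r | r ∈ S ∧ (postRecv δ a {r}).Nonempty}

/-- The edge relation `V →_G V'` of the graph `G` on tuples of subsets of `Q`. -/
def GEdge {D Q : Type} (δ : Set (Q × Op D × Q)) {m : ℕ} (V V' : Fin m → Set Q) : Prop :=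
  ∃ (a : D) (j : Fin m) (s s' : Q), s ∈ V j ∧ s' ∈ V' j ∧ (s, Op.send a, s') ∈ δ ∧
    ∃ Gen Kill : Fin m → Set Q,
      (∀ i, Gen i ⊆ postRecv δ a (V i)) ∧
      (∀ i, Kill i ⊆ enabledRecv δ a (V i)) ∧
      (∀ i, i ≠ j → V' i = (V i \ Kill i) ∪ Gen i) ∧
      (∃ U : Set Q, (U = V j ∨ U = V j \ {s}) ∧ V' j = ((U \ Kill j) ∪ Gen j) ∪ {s'}) ∧
      (∀ i, ∀ q ∈ Kill i, (postRecv δ a {q} ∩ Gen i).Nonempty)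

lemma postRecv_mono {D Q : Type} (δ : Set (Q × Op D × Q)) (a : D) {S T : Set Q}
    (h : S ⊆ T) : postRecv δ a S ⊆ postRecv δ a T := by
  rintro x ⟨r, hr, hδ⟩; exact ⟨r, h hr, hδ⟩

lemma GEdge_mono {D Q : Type} (δ : Set (Q × Op D × Q)) {m : ℕ}
    {V V' W : Fin m → Set Q} (hE : GEdge δ V V') (hVW : ∀ t, V t ⊆ W t) :
    GEdge δ W (fun t => W t ∪ V' t) := by
  obtain ⟨a, j, s, s', hs, hs', hδ, Gen, Kill, hGen, _, hOff, ⟨U, hU, hVj⟩, _⟩ := hE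
  refine ⟨a, j, s, s', hVW j hs, Or.inr hs', hδ,
    (fun i => if i = j then (V' i \ W i) \ {s'} else V' i \ W i), fun _ => ∅,
    ?_, by simp, ?_, ⟨W j, Or.inl rfl, ?_⟩, by simp⟩
  · intro i x hx
    by_cases hij : i = j
    · subst hij
      simp only [if_pos rfl] at hx
      obtain ⟨⟨hxV', hxW⟩, hxs'⟩ := hx
      rw [hVj] at hxV'
      rcases hxV' with (⟨hxU, _⟩ | hxG) | hxs
      · exact absurd (hVW i (by rcases hU with h1 | h1 <;> simp [h1] at hxU <;> tauto)) hxW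
      · exact postRecv_mono δ a (hVW i) (hGen i hxG)
      · exact absurd hxs hxs'
    · simp only [if_neg hij] at hx
      obtain ⟨hxV', hxW⟩ := hx
      rw [hOff i hij] at hxV'
      rcases hxV' with ⟨hxV, _⟩ | hxG
      · exact absurd (hVW i hxV) hxW
      · exact postRecv_mono δ a (hVW i) (hGen i hxG)
  · intro i hij
    simp only [if_neg hij, Set.diff_empty, Set.union_diff_self]
  · ext x
    simp only [if_pos rfl, Set.diff_empty, Set.mem_union, Set.mem_diff,
      Set.mem_singleton_iff]
    constructor
    · rintro (hW | hV)
      · exact Or.inl (Or.inl hW)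
      · by_cases hx : x = s'
        · exact Or.inr hx
        · by_cases hW : x ∈ W j
          · exact Or.inl (Or.inl hW)
          · exact Or.inl (Or.inr ⟨⟨hV, hW⟩, hx⟩)
    · rintro ((hW | ⟨⟨hV, _⟩, _⟩) | hx)
      · exact Or.inl hW
      · exact Or.inr hV
      · exact Or.inr (hx ▸ hs')

/-- For every path `U_0 →_G U_1 →_G … →_G U_{ℓ-1}` in the graph `G` there is a monotonically
increasing path `U'_0 →_G … →_G U'_{ℓ-1}` with `U'_0 = U_0`, `U'_j ⊑ U'_{j+1}` for all
consecutive vertices, and `U_i ⊑ U'_j` for all `i ≤ j` (each edge of the original path can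
be simulated with empty Kill sets, so that no state is deleted). -/
theorem increasing_simulation {D Q : Type} [Fintype Q] (δ : Set (Q × Op D × Q))
    {m : ℕ} (ℓ : ℕ) (Us : ℕ → Fin m → Set Q)
    (h : ∀ j, j + 1 < ℓ → GEdge δ (Us j) (Us (j + 1))) :
    ∃ Us' : ℕ → Fin m → Set Q,
      Us' 0 = Us 0 ∧
      (∀ j, j + 1 < ℓ → GEdge δ (Us' j) (Us' (j + 1)) ∧ ∀ t, Us' j t ⊆ Us' (j + 1) t) ∧
      (∀ i j, i ≤ j → j < ℓ → ∀ t, Us i t ⊆ Us' j t) := by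
  refine ⟨fun j t => ⋃ i ≤ j, Us i t, ?_, ?_, ?_⟩
  · funext t; ext x; simp [Nat.le_zero]
  · intro j hj
    have key : (fun t => ⋃ i ≤ j + 1, Us i t)
        = fun t => (⋃ i ≤ j, Us i t) ∪ Us (j + 1) t := by
      funext t; ext x
      simp only [Set.mem_iUnion, Set.mem_union, Nat.le_add_one_iff]
      constructor
      · rintro ⟨i, hi | hi, hx⟩
        · exact Or.inl ⟨i, hi, hx⟩
        · exact Or.inr (hi ▸ hx)
      · rintro (⟨i, hi, hx⟩ | hx)
        · exact ⟨i, Or.inl hi, hx⟩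
        · exact ⟨j + 1, Or.inr rfl, hx⟩
    have hsub : ∀ t, Us j t ⊆ ⋃ i ≤ j, Us i t := fun t x hx =>
      Set.mem_iUnion₂.2 ⟨j, le_refl j, hx⟩
    constructor
    · show GEdge δ (fun t => ⋃ i ≤ j, Us i t) (fun t => ⋃ i ≤ j + 1, Us i t)
      rw [key]; exact GEdge_mono δ (h j hj) hsub
    · intro t x hx
      simp only [Set.mem_iUnion] at hx ⊢
      obtain ⟨i, hi, hx⟩ := hx
      exact ⟨i, hi.trans (Nat.le_succ j), hx⟩
  · intro i j hij _ t x hx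
    exact Set.mem_iUnion₂.2 ⟨i, hij, hx⟩
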